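/- arXiv:2311.11304 — 3 statements merged into one kernel-verified Lean document; each statement's English description precedes it below -/
import Mathlib

section
/- For every ε > 0, the infinite product ∏_{n=2}^∞ Erf(√((1+ε) ln n)) converges to a strictly positive limit, where Erf(x) = (1/√π) ∫_{-x}^{x} e^{-ξ²} dξ. -/
open MeasureTheory Real Filter

/-- The Gauss error function `Erf x = (2/√π) ∫ t in 0..x, e^{-t²}`. -/
noncomputable def Erf (x : ℝ) : ℝ :=
  (2 / Real.sqrt π) * ∫ t in (0 : ℝ)..x, Real.exp (-t ^ 2)

/-!
Write `x_n = √((1+ε) log n)`, so that `e^{-x_n²} = n^{-(1+ε)}`. The Gaussian tail bound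
`∫_x^∞ e^{-t²} dt ≤ e^{-x²}/(2x)` gives `0 ≤ 1 - Erf x_n ≤ n^{-(1+ε)}` for `n ≥ 2`, a summable
sequence. A product of positive factors `a_n` with `∑ (1 - a_n) < ∞` has summable logarithms,
hence converges to `exp (∑ log a_n) > 0`.
-/

open Set

theorem integrable_exp_neg_sq : Integrable fun t : ℝ => exp (-t ^ 2) := by
  simpa using integrable_exp_neg_mul_sq one_pos

theorem integral_Ioi_mul_exp_neg_sq (x : ℝ) :
    ∫ t in Ioi x, t * exp (-t ^ 2) = exp (-x ^ 2) / 2 := by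
  have hderiv : ∀ t ∈ Ici x, HasDerivAt (fun t : ℝ => -(exp (-t ^ 2) / 2)) (t * exp (-t ^ 2)) t :=
    fun t _ => ((((hasDerivAt_pow 2 t).fun_neg).exp.div_const 2).fun_neg).congr_deriv (by ring)
  have hint : IntegrableOn (fun t : ℝ => t * exp (-t ^ 2)) (Ioi x) := by
    simpa using (integrable_mul_exp_neg_mul_sq one_pos).integrableOn
  have hlim : Tendsto (fun t : ℝ => -(exp (-t ^ 2) / 2)) atTop (nhds 0) := by
    have hsq : Tendsto (fun t : ℝ => -t ^ 2) atTop atBot :=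
      tendsto_neg_atTop_atBot.comp (tendsto_pow_atTop two_ne_zero)
    simpa using ((tendsto_exp_atBot.comp hsq).div_const 2).neg
  rw [integral_Ioi_of_hasDerivAt_of_tendsto' hderiv hint hlim]
  ring

/-- On `(x, ∞)` one has `e^{-t²} ≤ (t / x) e^{-t²}`, and the right side integrates in closed form. -/
theorem integral_Ioi_exp_neg_sq_le {x : ℝ} (hx : 0 < x) :
    ∫ t in Ioi x, exp (-t ^ 2) ≤ exp (-x ^ 2) / (2 * x) := by
  have hle : ∀ t ∈ Ioi x, exp (-t ^ 2) ≤ x⁻¹ * (t * exp (-t ^ 2)) := by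
    intro t ht
    have h1 : 1 ≤ x⁻¹ * t := by rw [inv_mul_eq_div, one_le_div hx]; exact le_of_lt ht
    nlinarith [exp_pos (-t ^ 2)]
  have hint : IntegrableOn (fun t : ℝ => x⁻¹ * (t * exp (-t ^ 2))) (Ioi x) := by
    simpa using ((integrable_mul_exp_neg_mul_sq one_pos).const_mul x⁻¹).integrableOn
  calc ∫ t in Ioi x, exp (-t ^ 2)
      ≤ ∫ t in Ioi x, x⁻¹ * (t * exp (-t ^ 2)) :=
        setIntegral_mono_on integrable_exp_neg_sq.integrableOn hint measurableSet_Ioi hle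
    _ = exp (-x ^ 2) / (2 * x) := by
        rw [integral_const_mul, integral_Ioi_mul_exp_neg_sq]
        field_simp

theorem one_sub_Erf_eq_integral_Ioi (x : ℝ) :
    1 - Erf x = 2 / √π * ∫ t in Ioi x, exp (-t ^ 2) := by
  have hsplit := intervalIntegral.integral_interval_add_Ioi (a := 0) (b := x)
    integrable_exp_neg_sq.integrableOn integrable_exp_neg_sq.integrableOn
  have hhalf : ∫ t in Ioi (0 : ℝ), exp (-t ^ 2) = √π / 2 := by
    simpa using integral_gaussian_Ioi 1
  have hπ : 0 < √π := sqrt_pos.2 pi_pos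
  rw [hhalf] at hsplit
  rw [Erf, eq_sub_of_add_eq hsplit]
  field_simp
  ring

theorem Erf_pos {x : ℝ} (hx : 0 < x) : 0 < Erf x := by
  have hint : 0 < ∫ t in (0 : ℝ)..x, exp (-t ^ 2) :=
    intervalIntegral.intervalIntegral_pos_of_pos_on
      ((by fun_prop : Continuous fun t : ℝ => exp (-t ^ 2)).intervalIntegrable 0 x)
      (fun t _ => exp_pos _) hx
  rw [Erf]
  positivity

theorem one_sub_Erf_nonneg (x : ℝ) : 0 ≤ 1 - Erf x := by
  rw [one_sub_Erf_eq_integral_Ioi]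
  exact mul_nonneg (by positivity) (setIntegral_nonneg measurableSet_Ioi fun t _ => (exp_pos _).le)

theorem one_sub_Erf_le {x : ℝ} (hx : 0 < x) : 1 - Erf x ≤ exp (-x ^ 2) / (x * √π) := by
  have hπ : 0 < √π := sqrt_pos.2 pi_pos
  calc 1 - Erf x = 2 / √π * ∫ t in Ioi x, exp (-t ^ 2) := one_sub_Erf_eq_integral_Ioi x
    _ ≤ 2 / √π * (exp (-x ^ 2) / (2 * x)) := by
        gcongr
        exact integral_Ioi_exp_neg_sq_le hx
    _ = exp (-x ^ 2) / (x * √π) := by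
        field_simp

theorem one_sub_Erf_sqrt_mul_log_le {c : ℝ} (hc : 1 ≤ c) {n : ℕ} (hn : 2 ≤ n) :
    1 - Erf √(c * log n) ≤ (n : ℝ) ^ (-c) := by
  have hn' : (2 : ℝ) ≤ n := by exact_mod_cast hn
  have hlog : log 2 ≤ log n := log_le_log two_pos hn'
  have hpos : 0 < c * log n := mul_pos (by linarith) (by linarith [log_two_gt_d9])
  have hexp : exp (-√(c * log n) ^ 2) = (n : ℝ) ^ (-c) := by
    rw [sq_sqrt hpos.le, rpow_def_of_pos (by linarith)]
    ring_nf
  have hone : 1 ≤ √(c * log n) * √π := by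
    rw [← sqrt_mul hpos.le, one_le_sqrt]
    nlinarith [log_two_gt_d9, pi_gt_three]
  calc 1 - Erf √(c * log n) ≤ exp (-√(c * log n) ^ 2) / (√(c * log n) * √π) :=
        one_sub_Erf_le (sqrt_pos.2 hpos)
    _ ≤ exp (-√(c * log n) ^ 2) := div_le_self (exp_pos _).le hone
    _ = (n : ℝ) ^ (-c) := hexp

theorem summable_one_sub_Erf_sqrt_mul_log {c : ℝ} (hc : 1 < c) :
    Summable fun k : ℕ => 1 - Erf √(c * log ↑(k + 2)) := by
  have hsum : Summable fun k : ℕ => ((k + 2 : ℕ) : ℝ) ^ (-c) :=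
    (summable_nat_add_iff 2).2 (summable_nat_rpow.2 (by linarith))
  exact hsum.of_nonneg_of_le (fun k => one_sub_Erf_nonneg _)
    fun k => one_sub_Erf_sqrt_mul_log_le hc.le (by omega)

theorem exists_pos_hasProd_of_summable_one_sub {ι : Type*} {a : ι → ℝ} (ha : ∀ i, 0 < a i)
    (hs : Summable fun i => 1 - a i) : ∃ P, 0 < P ∧ HasProd a P := by
  have hlog : Summable fun i => log (a i) :=
    (summable_log_one_add_of_summable hs.neg).congr fun i => by simp
  exact ⟨_, exp_pos _, hasProd_of_hasSum_log ha hlog.hasSum⟩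

theorem HasProd.tendsto_prod_Icc_of_nat_add {M : Type*} [CommMonoid M] [TopologicalSpace M]
    {f : ℕ → M} {m : M} (k : ℕ) (h : HasProd (fun n => f (n + k)) m) :
    Tendsto (fun N => ∏ n ∈ Finset.Icc k N, f n) atTop (nhds m) := by
  have hIcc : ∀ N, ∏ i ∈ Finset.range (N + 1 - k), f (i + k) = ∏ n ∈ Finset.Icc k N, f n := by
    intro N
    rw [← Finset.Ico_add_one_right_eq_Icc, Finset.prod_Ico_eq_prod_range]
    simp only [add_comm]
  exact (h.tendsto_prod_nat.comp
    ((tendsto_sub_atTop_nat k).comp (tendsto_add_atTop_nat 1))).congr hIcc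

/-- For every `ε > 0`, the infinite product `∏_{n=2}^∞ Erf (√((1+ε) ln n))`
converges to a strictly positive limit. -/
theorem erf_prod_pos_of_eps_pos (ε : ℝ) (hε : 0 < ε) :
    ∃ P : ℝ, 0 < P ∧
      Tendsto (fun N : ℕ => ∏ n ∈ Finset.Icc 2 N, Erf (Real.sqrt ((1 + ε) * Real.log n)))
        atTop (nhds P) := by
  have hfactor_pos : ∀ k : ℕ, 0 < Erf √((1 + ε) * log ↑(k + 2)) := fun k =>
    Erf_pos (sqrt_pos.2 (mul_pos (by linarith) (log_pos (by norm_cast; omega))))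
  obtain ⟨P, hP, hprod⟩ := exists_pos_hasProd_of_summable_one_sub hfactor_pos
    (summable_one_sub_Erf_sqrt_mul_log (by linarith))
  exact ⟨P, hP, hprod.tendsto_prod_Icc_of_nat_add 2⟩
end

section
/- Let μ_ρ be the product measure on ℝ^ℕ of identical centered Gaussian measures with variance ρ > 0. The set Z_ρ^0 of sequences x with |x_n| < √(2ρ ln n) for all sufficiently large n has μ_ρ-measure zero. -/
open MeasureTheory ProbabilityTheory

/-- `μ` is the countable product on `ℝ^ℕ` of identical centered Gaussian
measures of variance `ρ`: it is a probability measure, the coordinates are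
independent, and each coordinate is distributed as `gaussianReal 0 ρ`. -/
def IsGaussianProductMeasure (μ : Measure (ℕ → ℝ)) (ρ : NNReal) : Prop :=
  IsProbabilityMeasure μ ∧
    iIndepFun (fun n (x : ℕ → ℝ) => x n) μ ∧
    ∀ n : ℕ, μ.map (fun x : ℕ → ℝ => x n) = gaussianReal 0 ρ

/-- Auxiliary: `∑ 1/(n · max 1 (log n))` diverges, by Cauchy condensation. -/
lemma aux_not_summable :
    ¬ Summable (fun n : ℕ => ((n : ℝ) * max 1 (Real.log n))⁻¹) := by
  intro h
  have h_nonneg : ∀ n : ℕ, 0 ≤ ((n : ℝ) * max 1 (Real.log n))⁻¹ := by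
    intro n
    have h1 : (0:ℝ) < max 1 (Real.log n) := lt_of_lt_of_le one_pos (le_max_left _ _)
    positivity
  have h_mono : ∀ ⦃m n : ℕ⦄, 0 < m → m ≤ n →
      ((n : ℝ) * max 1 (Real.log n))⁻¹ ≤ ((m : ℝ) * max 1 (Real.log m))⁻¹ := by
    intro m n hm hmn
    have hm0 : (0:ℝ) < (m:ℝ) := by exact_mod_cast hm
    have hmax : (0:ℝ) < max 1 (Real.log m) := lt_of_lt_of_le one_pos (le_max_left _ _)
    have hden : (0:ℝ) < (m:ℝ) * max 1 (Real.log m) := by positivity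
    apply inv_anti₀ hden
    have hlog : Real.log m ≤ Real.log n :=
      Real.log_le_log hm0 (by exact_mod_cast hmn)
    have : max 1 (Real.log m) ≤ max 1 (Real.log n) := max_le_max le_rfl hlog
    have hmn' : (m:ℝ) ≤ (n:ℝ) := by exact_mod_cast hmn
    exact mul_le_mul hmn' this hmax.le (by positivity)
  have h2 := (summable_condensed_iff_of_nonneg h_nonneg h_mono).2 h
  -- `2^k * F(2^k) = (max 1 (k * log 2))⁻¹ ≥ (k : ℝ)⁻¹`
  have h3 : Summable (fun k : ℕ => ((k : ℝ))⁻¹) := by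
    refine Summable.of_nonneg_of_le (fun k => by positivity) (fun k => ?_) h2
    have hpow : ((2 ^ k : ℕ) : ℝ) = (2:ℝ) ^ k := by push_cast; ring
    have hlog : Real.log ((2 ^ k : ℕ) : ℝ) = k * Real.log 2 := by
      rw [hpow, Real.log_pow]
    have h2k : (0:ℝ) < (2:ℝ) ^ k := by positivity
    have hrw : (2:ℝ) ^ k * (((2 ^ k : ℕ) : ℝ) * max 1 (Real.log ((2 ^ k : ℕ) : ℝ)))⁻¹
        = (max 1 ((k:ℝ) * Real.log 2))⁻¹ := by
      rw [hlog, hpow, mul_inv, ← mul_assoc, mul_inv_cancel₀ h2k.ne', one_mul]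
    rw [hrw]
    rcases Nat.eq_zero_or_pos k with hk | hk
    · simp [hk]
    · have hk1 : (1:ℝ) ≤ (k:ℝ) := by exact_mod_cast hk
      have hmax : max 1 ((k:ℝ) * Real.log 2) ≤ (k:ℝ) := by
        refine max_le hk1 ?_
        have : Real.log 2 ≤ 1 := by
          rw [← Real.log_exp 1]
          exact Real.log_le_log two_pos (by linarith [Real.add_one_le_exp (1:ℝ)])
        nlinarith [Real.log_nonneg (by norm_num : (1:ℝ) ≤ 2)]
      exact inv_anti₀ (lt_of_lt_of_le one_pos (le_max_left _ _)) hmax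
  exact Real.not_summable_natCast_inv (by simpa using h3)

/-- Auxiliary: lower bound for the two-sided Gaussian tail by a box under the
density curve. -/
lemma aux_gaussian_tail (ρ : NNReal) (hρ : ρ ≠ 0) {a b : ℝ} (ha : 0 ≤ a) (hab : a ≤ b) :
    ENNReal.ofReal ((b - a) * gaussianPDFReal 0 ρ b)
      ≤ gaussianReal 0 ρ {y : ℝ | a ≤ |y|} := by
  have hsub : Set.Icc a b ⊆ {y : ℝ | a ≤ |y|} := by
    intro y hy
    exact hy.1.trans (le_abs_self y)
  refine le_trans ?_ (measure_mono hsub)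
  rw [gaussianReal_apply _ hρ]
  have hpdf_le : ∀ x ∈ Set.Icc a b, gaussianPDF 0 ρ b ≤ gaussianPDF 0 ρ x := by
    intro x hx
    apply ENNReal.ofReal_le_ofReal
    unfold gaussianPDFReal
    have hx0 : 0 ≤ x := ha.trans hx.1
    have hv : (0:ℝ) < (ρ:ℝ) := by exact_mod_cast pos_iff_ne_zero.2 hρ
    have h2v : (0:ℝ) < 2 * (ρ:ℝ) := by linarith
    have key : -(b - 0)^2 / (2 * (ρ:ℝ)) ≤ -(x - 0)^2 / (2 * (ρ:ℝ)) := by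
      rw [div_le_div_iff₀ h2v h2v]
      have hxb : x ^ 2 ≤ b ^ 2 := by nlinarith [hx.2]
      nlinarith [mul_le_mul_of_nonneg_right hxb h2v.le]
    have hexp := Real.exp_le_exp.2 key
    have hc : (0:ℝ) ≤ (Real.sqrt (2 * Real.pi * ρ))⁻¹ := by positivity
    exact mul_le_mul_of_nonneg_left hexp hc
  calc ENNReal.ofReal ((b - a) * gaussianPDFReal 0 ρ b)
      = gaussianPDF 0 ρ b * volume (Set.Icc a b) := by
        rw [Real.volume_Icc, gaussianPDF, ← ENNReal.ofReal_mul
          (gaussianPDFReal_nonneg 0 ρ b), mul_comm]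
    _ = ∫⁻ _ in Set.Icc a b, gaussianPDF 0 ρ b := (setLIntegral_const _ _).symm
    _ ≤ ∫⁻ x in Set.Icc a b, gaussianPDF 0 ρ x :=
        setLIntegral_mono' measurableSet_Icc hpdf_le

/-- Auxiliary real computation: for `log n ≥ 1` there is a point `b` past the
threshold `√(2ρ log n)` such that the box `(b - a) · pdf b` under the Gaussian
density is at least `K / (n log n)`. -/
lemma aux_key (ρ : NNReal) (hρ : 0 < ρ) {n : ℕ} (hn : 1 ≤ Real.log n) :
    ∃ b : ℝ, Real.sqrt (2 * ρ * Real.log n) ≤ b ∧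
      (Real.sqrt ρ * Real.exp (-(3:ℝ)/2) * (Real.sqrt (2 * Real.pi * ρ))⁻¹ / Real.sqrt 2)
          * ((n : ℝ) * Real.log n)⁻¹
        ≤ (b - Real.sqrt (2 * ρ * Real.log n)) * gaussianPDFReal 0 ρ b := by
  have hρR : (0:ℝ) < (ρ:ℝ) := by exact_mod_cast hρ
  set L : ℝ := Real.log n with hLdef
  have hnpos : (0:ℝ) < (n:ℝ) := by
    rcases Nat.eq_zero_or_pos n with h0 | h0
    · rw [hLdef, h0] at hn; norm_num at hn
    · exact_mod_cast h0
  have hL1 : 1 ≤ L := hn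
  set s : ℝ := Real.sqrt ρ with hsdef
  have hs : 0 < s := Real.sqrt_pos.2 hρR
  have hs2 : s ^ 2 = (ρ:ℝ) := Real.sq_sqrt hρR.le
  set t : ℝ := Real.sqrt (2 * L) with htdef
  have ht2 : t ^ 2 = 2 * L := Real.sq_sqrt (by linarith)
  have ht0 : 0 ≤ t := Real.sqrt_nonneg _
  have ht1 : 1 ≤ t := by nlinarith
  have ha_eq : Real.sqrt (2 * (ρ:ℝ) * L) = s * t := by
    rw [show 2 * (ρ:ℝ) * L = (s * t) ^ 2 by rw [mul_pow, hs2, ht2]; ring]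
    exact Real.sqrt_sq (by positivity)
  refine ⟨s * t + s / t, ?_, ?_⟩
  · rw [ha_eq]
    have : 0 < s / t := by positivity
    linarith
  · rw [ha_eq]
    have hbsub : s * t + s / t - s * t = s / t := by ring
    rw [hbsub]
    -- bound the exponential from below
    have hb2 : (s * t + s / t - 0) ^ 2 ≤ (ρ:ℝ) * (2 * L + 3) := by
      have htinv : (s / t) ^ 2 ≤ s ^ 2 := by
        rw [div_pow]
        have ht2' : (1:ℝ) ≤ t ^ 2 := by nlinarith
        rw [div_le_iff₀ (by positivity)]
        nlinarith [sq_nonneg s]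
      have hexpand : (s * t + s / t - 0) ^ 2
          = s ^ 2 * t ^ 2 + 2 * s ^ 2 + (s / t) ^ 2 := by
        field_simp
        ring
      rw [hexpand, hs2, ht2]
      nlinarith [htinv, hs2]
    have hexp : Real.exp (-(3:ℝ)/2) / (n:ℝ)
        ≤ Real.exp (-(s * t + s / t - 0) ^ 2 / (2 * (ρ:ℝ))) := by
      have hkey : -L - 3/2 ≤ -(s * t + s / t - 0) ^ 2 / (2 * (ρ:ℝ)) := by
        rw [le_div_iff₀ (by positivity)]
        nlinarith [hb2]
      refine le_trans (le_of_eq ?_) (Real.exp_le_exp.2 hkey)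
      rw [show -L - 3/2 = (-(3:ℝ)/2) + (-L) by ring, Real.exp_add, Real.exp_neg,
        hLdef, Real.exp_log hnpos]
      ring
    -- put things together
    have hts : t ≤ Real.sqrt 2 * L := by
      have h1 : t = Real.sqrt 2 * Real.sqrt L := by
        rw [htdef, Real.sqrt_mul (by norm_num)]
      have h2 : Real.sqrt L ≤ L := by
        nlinarith [Real.sq_sqrt (by linarith : (0:ℝ) ≤ L), Real.sqrt_nonneg L]
      rw [h1]
      have : (0:ℝ) ≤ Real.sqrt 2 := Real.sqrt_nonneg 2
      nlinarith
    have hst : s / (Real.sqrt 2 * L) ≤ s / t := by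
      apply div_le_div_of_nonneg_left hs.le (by positivity) hts
    unfold gaussianPDFReal
    have hC : (0:ℝ) ≤ (Real.sqrt (2 * Real.pi * ρ))⁻¹ := by positivity
    calc (s * Real.exp (-(3:ℝ)/2) * (Real.sqrt (2 * Real.pi * ρ))⁻¹ / Real.sqrt 2)
            * ((n : ℝ) * L)⁻¹
        = (s / (Real.sqrt 2 * L)) * ((Real.sqrt (2 * Real.pi * ρ))⁻¹
            * (Real.exp (-(3:ℝ)/2) / (n:ℝ))) := by
          ring
      _ ≤ (s / t) * ((Real.sqrt (2 * Real.pi * ρ))⁻¹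
            * Real.exp (-(s * t + s / t - 0) ^ 2 / (2 * (ρ:ℝ)))) := by
          refine mul_le_mul hst ?_ ?_ (by positivity)
          · exact mul_le_mul_of_nonneg_left hexp hC
          · positivity
      _ = (s / t) * ((Real.sqrt (2 * Real.pi * ρ))⁻¹
            * Real.exp (-(s * t + s / t - 0) ^ 2 / (2 * (ρ:ℝ)))) := rfl

set_option maxHeartbeats 1000000 in
/-- The set of sequences `x` with `|x n| < √(2 ρ ln n)` for all sufficiently
large `n` has measure zero under the product of centered Gaussians of
variance `ρ > 0`. -/
theorem gaussianProduct_measure_tail_set_eq_zero (ρ : NNReal) (hρ : 0 < ρ)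
    (μ : Measure (ℕ → ℝ)) (hμ : IsGaussianProductMeasure μ ρ) :
    μ {x : ℕ → ℝ | ∃ N : ℕ, ∀ n ≥ N,
        |x n| < Real.sqrt (2 * ρ * Real.log n)} = 0 := by
  obtain ⟨hprob, hind, hmap⟩ := hμ
  haveI := hprob
  have hρ' : ρ ≠ 0 := hρ.ne'
  set c : ℕ → ℝ := fun n => Real.sqrt (2 * ρ * Real.log n) with hc
  set A : ℕ → Set (ℕ → ℝ) :=
    fun n => (fun x : ℕ → ℝ => x n) ⁻¹' {y : ℝ | c n ≤ |y|} with hA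
  have hsm : ∀ n, MeasurableSet {y : ℝ | c n ≤ |y|} := fun n =>
    measurableSet_le measurable_const measurable_abs
  have hAm : ∀ n, MeasurableSet (A n) := fun n =>
    (hsm n).preimage (measurable_pi_apply n)
  have hindep : iIndepSet A μ := by
    rw [iIndepSet_iff_meas_biInter hAm]
    intro S
    exact hind.meas_biInter fun i _ => ⟨{y : ℝ | c i ≤ |y|}, hsm i, rfl⟩
  have hμA : ∀ n, μ (A n) = gaussianReal 0 ρ {y : ℝ | c n ≤ |y|} := fun n => by
    rw [← hmap n, Measure.map_apply (measurable_pi_apply n) (hsm n)]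
  have htop : (∑' n, μ (A n)) = ⊤ := by
    by_contra hfin
    have hsum : Summable fun n => (μ (A n)).toReal := ENNReal.summable_toReal hfin
    set K : ℝ := Real.sqrt ρ * Real.exp (-(3:ℝ)/2) * (Real.sqrt (2 * Real.pi * ρ))⁻¹
      / Real.sqrt 2 with hK
    have hρR : (0:ℝ) < (ρ:ℝ) := by exact_mod_cast hρ
    have hKpos : 0 < K := by
      have h1 : (0:ℝ) < Real.sqrt ρ := Real.sqrt_pos.2 hρR
      have h2 : (0:ℝ) < 2 * Real.pi * ρ := by positivity
      have h3 : (0:ℝ) < Real.sqrt (2 * Real.pi * ρ) := Real.sqrt_pos.2 h2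
      rw [hK]
      positivity
    have hlow : ∀ n : ℕ, 3 ≤ n →
        K * ((n:ℝ) * max 1 (Real.log n))⁻¹ ≤ (μ (A n)).toReal := by
      intro n hn
      have hn3 : (3:ℝ) ≤ (n:ℝ) := by exact_mod_cast hn
      have hlog : 1 ≤ Real.log n := by
        rw [Real.le_log_iff_exp_le (by linarith)]
        calc Real.exp 1 ≤ 2.7182818286 := Real.exp_one_lt_d9.le
          _ ≤ (n:ℝ) := by linarith
      obtain ⟨b, hab, hbound⟩ := aux_key ρ hρ hlog
      have h1 : ENNReal.ofReal (K * ((n:ℝ) * Real.log n)⁻¹) ≤ μ (A n) := by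
        rw [hμA n]
        refine le_trans ?_ (aux_gaussian_tail ρ hρ' (Real.sqrt_nonneg _) hab)
        exact ENNReal.ofReal_le_ofReal hbound
      rw [max_eq_right hlog]
      exact (ENNReal.ofReal_le_iff_le_toReal (measure_ne_top μ _)).1 h1
    have hs3 : Summable fun n : ℕ => (μ (A (n + 3))).toReal :=
      (summable_nat_add_iff (f := fun n => (μ (A n)).toReal) 3).2 hsum
    have hs4 : Summable fun n : ℕ =>
        K * (((n + 3 : ℕ):ℝ) * max 1 (Real.log ((n + 3 : ℕ):ℝ)))⁻¹ := by
      refine Summable.of_nonneg_of_le (fun n => ?_) (fun n => hlow (n + 3) (by omega)) hs3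
      have hmax : (0:ℝ) < max 1 (Real.log ((n + 3 : ℕ):ℝ)) :=
        lt_of_lt_of_le one_pos (le_max_left _ _)
      have hcast : (0:ℝ) < ((n + 3 : ℕ):ℝ) := by positivity
      positivity
    have hs5 : Summable fun n : ℕ =>
        (((n + 3 : ℕ):ℝ) * max 1 (Real.log ((n + 3 : ℕ):ℝ)))⁻¹ :=
      (summable_mul_left_iff hKpos.ne').1 hs4
    exact aux_not_summable ((summable_nat_add_iff
      (f := fun n : ℕ => ((n:ℝ) * max 1 (Real.log n))⁻¹) 3).1 hs5)
  have hBC := measure_limsup_eq_one hAm hindep htop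
  have hset : {x : ℕ → ℝ | ∃ N : ℕ, ∀ n ≥ N,
      |x n| < Real.sqrt (2 * ρ * Real.log n)} = (Filter.limsup A Filter.atTop)ᶜ := by
    ext x
    simp only [Set.mem_compl_iff, Filter.mem_limsup_iff_frequently_mem, Filter.not_frequently,
      Filter.eventually_atTop, Set.mem_preimage, Set.mem_setOf_eq, not_le, hA, hc, ge_iff_le]
  rw [hset, measure_compl (MeasurableSet.measurableSet_limsup hAm) (measure_ne_top μ _), hBC,
    measure_univ, tsub_self]
end

section
/- Let M be an infinite matrix indexed by ℕ with diagonal entries M_{jj} = λ for a fixed λ, and suppose there exists A > 0 with |M_{jl}|² ≤ A/(j² − l²)² for all j ≠ l (j, l ≥ 1). Then the operator T with matrix T_{jl} = M_{jl} for j ≠ l and T_{jj} = 0 is Hilbert–Schmidt on ℓ². -/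
/-! Writing `a = j + 1`, `b = l + 1`, we have `(a² - b²)² = (a - b)² (a + b)² ≥ a² (a - b)²`.
Under the injection `(j, l) ↦ (j, j - l)` of `ℕ × ℕ` into `ℕ × ℤ`, the bound `1 / (a² (a - b)²)`
becomes the product `1 / (j + 1)² · 1 / k²`, which is summable since both factors are. -/

lemma summable_one_div_add_one_sq : Summable (fun n : ℕ => 1 / ((n : ℝ) + 1) ^ 2) := by
  have h := (summable_nat_add_iff 1).mpr (Real.summable_one_div_nat_pow.mpr one_lt_two)
  exact h.congr fun n => by push_cast; rfl

lemma summable_one_div_add_one_sq_mul_sub_sq :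
    Summable (fun p : ℕ × ℕ => 1 / (((p.1 : ℝ) + 1) ^ 2 * ((p.1 : ℝ) - p.2) ^ 2)) := by
  have hprod := summable_one_div_add_one_sq.mul_of_nonneg
    (Real.summable_one_div_int_pow.mpr one_lt_two) (fun _ => by positivity) (fun _ => by positivity)
  have hinj : Function.Injective (fun p : ℕ × ℕ => (p.1, (p.1 : ℤ) - p.2)) := by
    rintro ⟨j, l⟩ ⟨j', l'⟩ h
    simp only [Prod.mk.injEq] at h ⊢
    omega
  refine (hprod.comp_injective hinj).congr fun p => ?_
  simp [one_div, mul_comm]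

lemma sq_mul_sub_sq_le_sq_sub_sq {a b : ℝ} (ha : 0 ≤ a) (hb : 0 ≤ b) :
    a ^ 2 * (a - b) ^ 2 ≤ (a ^ 2 - b ^ 2) ^ 2 := by
  have h : a ^ 2 ≤ (a + b) ^ 2 := pow_le_pow_left₀ ha (by linarith) 2
  calc a ^ 2 * (a - b) ^ 2 ≤ (a + b) ^ 2 * (a - b) ^ 2 := by gcongr
    _ = (a ^ 2 - b ^ 2) ^ 2 := by ring

lemma div_sq_sub_sq_le_div {a b c : ℝ} (hc : 0 ≤ c) (ha : 0 < a) (hb : 0 ≤ b) (hab : a ≠ b) :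
    c / (a ^ 2 - b ^ 2) ^ 2 ≤ c / (a ^ 2 * (a - b) ^ 2) := by
  have hpos : 0 < a ^ 2 * (a - b) ^ 2 := by
    have : a - b ≠ 0 := sub_ne_zero.mpr hab
    positivity
  exact div_le_div_of_nonneg_left hc hpos (sq_mul_sub_sq_le_sq_sub_sq ha.le hb)

theorem offdiagonal_hilbertSchmidt_general (M : ℕ → ℕ → ℝ) (A : ℝ) (hA : 0 < A)
    (hbound : ∀ j l, j ≠ l →
      (M j l) ^ 2 ≤ A / (((j + 1 : ℝ)) ^ 2 - ((l + 1 : ℝ)) ^ 2) ^ 2) :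
    Summable (fun p : ℕ × ℕ =>
      (if p.1 = p.2 then (0 : ℝ) else M p.1 p.2) ^ 2) := by
  refine (summable_one_div_add_one_sq_mul_sub_sq.mul_left A).of_nonneg_of_le
    (fun _ => sq_nonneg _) fun ⟨j, l⟩ => ?_
  dsimp only
  split_ifs with hjl
  · simp [hjl]
  · have hne : (j + 1 : ℝ) ≠ l + 1 := by
      exact_mod_cast (add_left_injective 1).ne hjl
    calc M j l ^ 2 ≤ A / ((j + 1 : ℝ) ^ 2 - (l + 1 : ℝ) ^ 2) ^ 2 := hbound j l hjl
      _ ≤ A / ((j + 1 : ℝ) ^ 2 * ((j + 1 : ℝ) - (l + 1)) ^ 2) :=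
        div_sq_sub_sq_le_div hA.le (by positivity) (by positivity) hne
      _ = A * (1 / (((j : ℝ) + 1) ^ 2 * ((j : ℝ) - l) ^ 2)) := by
        rw [add_sub_add_right_eq_sub, mul_one_div]

/-- Let `M` be an infinite matrix indexed by the positive integers with
constant diagonal `λ` and off-diagonal decay `|M j l|² ≤ A/(j² − l²)²`.
Then the off-diagonal part `T` (with `T j l = M j l` for `j ≠ l`, `T j j = 0`)
is Hilbert–Schmidt on `ℓ²`, i.e. its matrix entries are square-summable. -/
theorem offdiagonal_hilbertSchmidt (M : ℕ → ℕ → ℝ) (lam : ℝ)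
    (hdiag : ∀ j, M j j = lam) (A : ℝ) (hA : 0 < A)
    (hbound : ∀ j l, j ≠ l →
      (M j l) ^ 2 ≤ A / (((j + 1 : ℝ)) ^ 2 - ((l + 1 : ℝ)) ^ 2) ^ 2) :
    Summable (fun p : ℕ × ℕ =>
      (if p.1 = p.2 then (0 : ℝ) else M p.1 p.2) ^ 2) :=
  offdiagonal_hilbertSchmidt_general M A hA hbound
end
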